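/- Let A : ℝ^d → ℝ^d be a C² vector field and define its Gaussian divergence δ(A)(x) = Σ_{k=1}^d (x_k A^k(x) - ∂A^k/∂x_k(x)). Then the Lie derivative of δ(A) along A satisfies 𝓛_A δ(A) = |A|² + δ(𝓛_A A) + ⟨∇A, (∇A)*⟩, where 𝓛_A A = (A·∇)A is the Lie derivative (directional derivative of A along A), ⟨·,·⟩ is the Hilbert–Schmidt inner product on d×d matrices, and (∇A)* is the transpose of the Jacobian ∇A. -/

import Mathlib

open scoped BigOperators

/-- Gaussian divergence of a vector field on `ℝ^d`:
`δ(B)(x) = ∑ k, (x_k B^k(x) - ∂_k B^k(x))`. -/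
noncomputable def gaussDiv {d : ℕ} (B : (Fin d → ℝ) → (Fin d → ℝ)) (x : Fin d → ℝ) : ℝ :=
  ∑ k, (x k * B x k - fderiv ℝ B x (Pi.single k 1) k)

/-- Lie derivative of a scalar function along a vector field: `𝓛_A f = ∑ ℓ A^ℓ ∂_ℓ f`. -/
noncomputable def lieDerivScalar {d : ℕ} (A : (Fin d → ℝ) → (Fin d → ℝ))
    (f : (Fin d → ℝ) → ℝ) (x : Fin d → ℝ) : ℝ :=
  ∑ ℓ, A x ℓ * fderiv ℝ f x (Pi.single ℓ 1)

/-- Lie derivative of a vector field along itself: `(𝓛_A A)^k = ∑ ℓ A^ℓ ∂_ℓ A^k`. -/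
noncomputable def lieDerivVec {d : ℕ} (A : (Fin d → ℝ) → (Fin d → ℝ))
    (x : Fin d → ℝ) : Fin d → ℝ :=
  fun k => ∑ ℓ, A x ℓ * fderiv ℝ A x (Pi.single ℓ 1) k

/-!
Differentiating `δ(A)` along `A` gives `|A|²`, the term `∑ₖ xₖ (𝓛_A A)ᵏ` and the third-order term
`∑ₖ,ₗ Aˡ ∂ₗ∂ₖ Aᵏ`. The product rule applied to `δ(𝓛_A A)` gives the same `x`-term, minus the trace
of `(∇A)²` and minus `∑ₖ,ₗ Aˡ ∂ₖ∂ₗ Aᵏ`. For a `C²` field the second derivative is symmetric, so the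
third-order terms cancel.
-/

section

variable {𝕜 : Type*} [NontriviallyNormedField 𝕜] {E : Type*} [NormedAddCommGroup E]
  [NormedSpace 𝕜 E] {ι : Type*} {F : Type*} [NormedAddCommGroup F] [NormedSpace 𝕜 F]

theorem fderiv_apply_apply {Φ : E → ι → F} {x : E} (hΦ : DifferentiableAt 𝕜 Φ x) (i : ι)
    (v : E) : fderiv 𝕜 (fun y => Φ y i) x v = fderiv 𝕜 Φ x v i := by
  simp [fderiv_apply hΦ]

theorem fderiv_fderiv_apply_apply [Fintype ι] {Φ : E → ι → F} {x : E}
    (hΦ : DifferentiableAt 𝕜 (fderiv 𝕜 Φ) x) (w : E) (i : ι) (v : E) :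
    fderiv 𝕜 (fun y => fderiv 𝕜 Φ y w i) x v = fderiv 𝕜 (fderiv 𝕜 Φ) x v w i := by
  rw [fderiv_apply_apply (hΦ.clm_apply (differentiableAt_const w)),
    fderiv_clm_apply hΦ (differentiableAt_const w)]
  simp

end

section

variable {d : ℕ}

theorem fderiv_gaussDiv_apply {B : (Fin d → ℝ) → (Fin d → ℝ)} {x : Fin d → ℝ}
    (hB : DifferentiableAt ℝ B x) (hB' : DifferentiableAt ℝ (fderiv ℝ B) x) (v : Fin d → ℝ) :
    fderiv ℝ (gaussDiv B) x v = ∑ k, (v k * B x k + x k * fderiv ℝ B x v k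
      - fderiv ℝ (fderiv ℝ B) x v (Pi.single k 1) k) := by
  change fderiv ℝ (fun y => ∑ k, (y k * B y k - fderiv ℝ B y (Pi.single k 1) k)) x v = _
  rw [fderiv_fun_sum fun k _ => by fun_prop, FunLike.coe_sum, Finset.sum_apply]
  refine Finset.sum_congr rfl fun k _ => ?_
  rw [fderiv_fun_sub (by fun_prop) (by fun_prop), fderiv_fun_mul (by fun_prop) (by fun_prop)]
  simp only [(hasFDerivAt_apply k x).fderiv, sub_apply, add_apply, smul_apply, smul_eq_mul,
    ContinuousLinearMap.proj_apply, fderiv_apply_apply hB, fderiv_fderiv_apply_apply hB']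
  ring

theorem fderiv_lieDerivVec_apply {A : (Fin d → ℝ) → (Fin d → ℝ)} {x : Fin d → ℝ}
    (hA : DifferentiableAt ℝ A x) (hA' : DifferentiableAt ℝ (fderiv ℝ A) x) (v : Fin d → ℝ)
    (k : Fin d) :
    fderiv ℝ (lieDerivVec A) x v k = ∑ ℓ, (fderiv ℝ A x v ℓ * fderiv ℝ A x (Pi.single ℓ 1) k
      + A x ℓ * fderiv ℝ (fderiv ℝ A) x v (Pi.single ℓ 1) k) := by
  have hL : DifferentiableAt ℝ (lieDerivVec A) x := by
    unfold lieDerivVec; fun_prop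
  rw [← fderiv_apply_apply hL k]
  change fderiv ℝ (fun y => ∑ ℓ, A y ℓ * fderiv ℝ A y (Pi.single ℓ 1) k) x v = _
  rw [fderiv_fun_sum fun ℓ _ => by fun_prop, FunLike.coe_sum, Finset.sum_apply]
  refine Finset.sum_congr rfl fun ℓ _ => ?_
  rw [fderiv_fun_mul (by fun_prop) (by fun_prop)]
  simp only [add_apply, smul_apply, smul_eq_mul, fderiv_apply_apply hA,
    fderiv_fderiv_apply_apply hA']
  ring

theorem lieDerivScalar_gaussDiv {A : (Fin d → ℝ) → (Fin d → ℝ)} {x : Fin d → ℝ}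
    (hA : DifferentiableAt ℝ A x) (hA' : DifferentiableAt ℝ (fderiv ℝ A) x) :
    lieDerivScalar A (gaussDiv A) x = ∑ k, A x k ^ 2 + ∑ k, x k * lieDerivVec A x k
      - ∑ k, ∑ ℓ, A x ℓ * fderiv ℝ (fderiv ℝ A) x (Pi.single ℓ 1) (Pi.single k 1) k := by
  simp only [lieDerivScalar, lieDerivVec, fderiv_gaussDiv_apply hA hA', Finset.mul_sum,
    Finset.sum_sub_distrib, Finset.sum_add_distrib, mul_sub, mul_add, Pi.single_apply, ite_mul,
    one_mul, zero_mul, Finset.sum_ite_eq', Finset.mem_univ, if_true]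
  rw [Finset.sum_comm (s := Finset.univ)
    (f := fun ℓ k => A x ℓ * fderiv ℝ (fderiv ℝ A) x (Pi.single ℓ 1) (Pi.single k 1) k)]
  simp only [sq]
  congr 2
  rw [Finset.sum_comm]
  exact Finset.sum_congr rfl fun k _ => Finset.sum_congr rfl fun ℓ _ => by ring

theorem gaussDiv_lieDerivVec {A : (Fin d → ℝ) → (Fin d → ℝ)} {x : Fin d → ℝ}
    (hA : DifferentiableAt ℝ A x) (hA' : DifferentiableAt ℝ (fderiv ℝ A) x) :
    gaussDiv (lieDerivVec A) x = ∑ k, x k * lieDerivVec A x k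
      - ∑ k, ∑ ℓ, (fderiv ℝ A x (Pi.single ℓ 1) k * fderiv ℝ A x (Pi.single k 1) ℓ
        + A x ℓ * fderiv ℝ (fderiv ℝ A) x (Pi.single k 1) (Pi.single ℓ 1) k) := by
  simp only [gaussDiv, fderiv_lieDerivVec_apply hA hA', Finset.sum_sub_distrib]
  congr 1
  exact Finset.sum_congr rfl fun k _ => Finset.sum_congr rfl fun ℓ _ => by ring

end

/-- For a `C²` vector field `A`,
`𝓛_A δ(A) = |A|² + δ(𝓛_A A) + ⟨∇A, (∇A)*⟩`. -/
theorem lieDeriv_gaussDiv {d : ℕ} (A : (Fin d → ℝ) → (Fin d → ℝ))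
    (hA : ContDiff ℝ 2 A) (x : Fin d → ℝ) :
    lieDerivScalar A (gaussDiv A) x
      = (∑ k, (A x k) ^ 2) + gaussDiv (lieDerivVec A) x
        + ∑ k, ∑ ℓ, fderiv ℝ A x (Pi.single ℓ 1) k * fderiv ℝ A x (Pi.single k 1) ℓ := by
  have hA₁ : DifferentiableAt ℝ A x := hA.contDiffAt.differentiableAt two_ne_zero
  have hA₂ : DifferentiableAt ℝ (fderiv ℝ A) x :=
    (hA.fderiv_right one_add_one_eq_two.le).contDiffAt.differentiableAt one_ne_zero
  have hsymm : IsSymmSndFDerivAt ℝ A x := hA.contDiffAt.isSymmSndFDerivAt (by simp)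
  rw [lieDerivScalar_gaussDiv hA₁ hA₂, gaussDiv_lieDerivVec hA₁ hA₂]
  simp only [hsymm (Pi.single _ 1) (Pi.single _ 1), Finset.sum_add_distrib]
  ring
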